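/- Let X be a real normed vector space, M a real vector space, and b : X → M → ℝ a bilinear map. Let X_h ⊆ X and M_h ⊆ M be linear subspaces, let c_F ≥ 0, and let Π : X → X be a linear map such that: (i) Π x ∈ X_h for all x ∈ X; (ii) Π w = w for all w ∈ X_h; (iii) ‖Π x‖ ≤ c_F ‖x‖ for all x ∈ X; and (iv) b (x − Π x) μ = 0 for all x ∈ X and all μ ∈ M_h. Let u ∈ X satisfy b u μ = 0 for all μ ∈ M_h, and set Z_h = {w ∈ X_h : b w μ = 0 for all μ ∈ M_h}. Then Π u ∈ Z_h and for every w ∈ X_h one has ‖u − Π u‖ ≤ (1 + c_F) ‖u − w‖; consequently the distance from u to Z_h is at most (1 + c_F) times the distance from u to X_h. -/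

import Mathlib

/-!
Since `Pf` fixes `X_h`, the defect `u - Pf u` is unchanged when `u` is replaced by `u - w` for any
`w ∈ X_h`; stability of `Pf` then bounds it by `(1 + c_F) ‖u - w‖`. Preservation of the constraint
puts `Pf u` in `Z_h`, so it is an admissible competitor for the distance to `Z_h`.
-/

theorem Metric.le_mul_infDist {X : Type*} [PseudoMetricSpace X] {x : X} {t : Set X} {r C : ℝ}
    (hC : 0 ≤ C) (ht : t.Nonempty) (h : ∀ y ∈ t, r ≤ C * dist x y) :
    r ≤ C * Metric.infDist x t := by
  have : Nonempty t := ht.to_subtype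
  rw [Metric.infDist_eq_iInf, Real.mul_iInf_of_nonneg hC]
  exact le_ciInf fun y => h y y.2

theorem LinearMap.norm_sub_apply_le_one_add_mul_norm_sub {R X : Type*} [Ring R]
    [SeminormedAddCommGroup X] [Module R X] {P : X →ₗ[R] X} {V : Submodule R X} {c : ℝ}
    (hfix : ∀ w ∈ V, P w = w) (hstab : ∀ x, ‖P x‖ ≤ c * ‖x‖) (u : X) {w : X} (hw : w ∈ V) :
    ‖u - P u‖ ≤ (1 + c) * ‖u - w‖ := by
  have hshift : u - P u = (u - w) - P (u - w) := by
    rw [map_sub, hfix w hw]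
    abel
  calc ‖u - P u‖ = ‖(u - w) - P (u - w)‖ := by rw [hshift]
    _ ≤ ‖u - w‖ + ‖P (u - w)‖ := norm_sub_le _ _
    _ ≤ ‖u - w‖ + c * ‖u - w‖ := by gcongr; exact hstab _
    _ = (1 + c) * ‖u - w‖ := by ring

theorem LinearMap.apply_eq_zero_of_sub_apply_eq_zero {R X M N : Type*} [CommRing R]
    [AddCommGroup X] [Module R X] [AddCommGroup M] [Module R M] [AddCommGroup N] [Module R N]
    (b : X →ₗ[R] M →ₗ[R] N) (P : X →ₗ[R] X) {x : X} {μ : M}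
    (hpres : b (x - P x) μ = 0) (hx : b x μ = 0) : b (P x) μ = 0 := by
  rwa [map_sub, LinearMap.sub_apply, hx, zero_sub, neg_eq_zero] at hpres

/-- The Fortin-operator approximation argument behind Lemma 7.6: if `Pf` is a
bounded linear projection onto `X_h` (stable with constant `c_F`) preserving
the constraint `b · μ = 0` for `μ ∈ M_h`, and `u` satisfies the constraint,
then `Pf u` lies in the discretely constrained space `Z_h` and
`‖u - Pf u‖ ≤ (1 + c_F) ‖u - w‖` for all `w ∈ X_h`; consequently
`dist(u, Z_h) ≤ (1 + c_F) dist(u, X_h)`. -/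
theorem fortin_operator_approximation
    {X M : Type*} [NormedAddCommGroup X] [NormedSpace ℝ X] [AddCommGroup M] [Module ℝ M]
    (b : X →ₗ[ℝ] M →ₗ[ℝ] ℝ)
    (Xh : Submodule ℝ X) (Mh : Submodule ℝ M)
    (cF : ℝ) (hcF : 0 ≤ cF)
    (Pf : X →ₗ[ℝ] X)
    (hmem : ∀ x : X, Pf x ∈ Xh)
    (hproj : ∀ w ∈ Xh, Pf w = w)
    (hstab : ∀ x : X, ‖Pf x‖ ≤ cF * ‖x‖)
    (hpres : ∀ x : X, ∀ μ ∈ Mh, b (x - Pf x) μ = 0)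
    (u : X) (hu : ∀ μ ∈ Mh, b u μ = 0) :
    Pf u ∈ {w : X | w ∈ Xh ∧ ∀ μ ∈ Mh, b w μ = 0} ∧
      (∀ w ∈ Xh, ‖u - Pf u‖ ≤ (1 + cF) * ‖u - w‖) ∧
      Metric.infDist u {w : X | w ∈ Xh ∧ ∀ μ ∈ Mh, b w μ = 0} ≤
        (1 + cF) * Metric.infDist u (Xh : Set X) := by
  have hZ : Pf u ∈ {w : X | w ∈ Xh ∧ ∀ μ ∈ Mh, b w μ = 0} :=
    ⟨hmem u, fun μ hμ => b.apply_eq_zero_of_sub_apply_eq_zero Pf (hpres u μ hμ) (hu μ hμ)⟩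
  have hquasi : ∀ w ∈ Xh, ‖u - Pf u‖ ≤ (1 + cF) * ‖u - w‖ := fun w hw =>
    Pf.norm_sub_apply_le_one_add_mul_norm_sub hproj hstab u hw
  refine ⟨hZ, hquasi, Metric.le_mul_infDist (by linarith) ⟨0, Xh.zero_mem⟩ fun w hw => ?_⟩
  calc Metric.infDist u _ ≤ dist u (Pf u) := Metric.infDist_le_dist_of_mem hZ
    _ ≤ (1 + cF) * dist u w := by simpa only [dist_eq_norm] using hquasi w hw
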